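/- arXiv:0709.3542 — 2 statements merged into one kernel-verified Lean document; each statement's English description precedes it below -/
import Mathlib

section
/- Let $R$ be a commutative ring, $\mathfrak{p}$ a prime ideal, and $a' \in (\mathbb{Z}/p^m\mathbb{Z})^n$ an element not lying in the submodule $A_{h}$. Write $a' = a + b$ with $b \in A_h$ and $a \in A'_h \setminus \{0\}$, where $A'_h$ is the complementary summand. Suppose $\phi : (\mathbb{Z}/p^m\mathbb{Z})^n \to R$ satisfies: (1) $\phi(x+y) \in \phi(x) + \phi(y) + \phi(x)R$ for all $x,y$; (2) $\phi(b) \in \mathfrak{p}$ for all $b \in A_h$; (3) $\phi(a) \notin \mathfrak{p}$ for all nonzero $a \in A'_h$. Then $\phi(a') \notin \mathfrak{p}$. -/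
theorem Ideal.apply_add_mem_of_apply_mem {M R : Type*} [Add M] [CommSemiring R] (I : Ideal R)
    {φ : M → R} (hadd : ∀ x y : M, ∃ r : R, φ (x + y) = φ x + φ y + φ x * r)
    {x y : M} (hx : φ x ∈ I) (hy : φ y ∈ I) : φ (x + y) ∈ I := by
  obtain ⟨r, hr⟩ := hadd x y
  rw [hr]
  exact I.add_mem (I.add_mem hx hy) (I.mul_mem_right r hx)

theorem stmt13_general (R : Type*) [CommRing R] (𝔭 : Ideal R)
    (p : ℕ) (m n : ℕ)
    (Ah Ah' : Submodule (ZMod (p ^ m)) (Fin n → ZMod (p ^ m)))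
    (φ : (Fin n → ZMod (p ^ m)) → R)
    (hadd : ∀ x y : Fin n → ZMod (p ^ m), ∃ r : R, φ (x + y) = φ x + φ y + φ x * r)
    (hvan : ∀ b ∈ Ah, φ b ∈ 𝔭)
    (hnonvan : ∀ a ∈ Ah', a ≠ 0 → φ a ∉ 𝔭)
    (a b : Fin n → ZMod (p ^ m)) (hb : b ∈ Ah) (ha : a ∈ Ah') (ha0 : a ≠ 0) :
    φ (a + b) ∉ 𝔭 := by
  intro hab
  have hφa : φ (a + b + -b) ∈ 𝔭 := 𝔭.apply_add_mem_of_apply_mem hadd hab (hvan _ (neg_mem hb))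
  rw [add_neg_cancel_right] at hφa
  exact hnonvan a ha ha0 hφa

/-- if `φ : (ℤ/p^m)^n → R` satisfies the formal-group addition law
`φ(x+y) ∈ φ(x) + φ(y) + φ(x)·R`, vanishes mod `𝔭` on `A_h = ⟨e₁,…,e_h⟩`, and is
non-vanishing mod `𝔭` on nonzero elements of the complementary summand
`A'_h = ⟨e_{h+1},…,e_n⟩`, then for `a' = a + b ∉ A_h` with `b ∈ A_h`, `a ∈ A'_h`
nonzero, we have `φ(a') ∉ 𝔭`. -/
theorem stmt13 (R : Type*) [CommRing R] (𝔭 : Ideal R) (h𝔭 : 𝔭.IsPrime)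
    (p : ℕ) (hp : p.Prime) (m n h : ℕ) (hm : 1 ≤ m) (hh : h ≤ n)
    (Ah Ah' : Submodule (ZMod (p ^ m)) (Fin n → ZMod (p ^ m)))
    (hAh : Ah = Submodule.span (ZMod (p ^ m))
      {v | ∃ i : Fin n, (i : ℕ) < h ∧ v = Pi.single i (1 : ZMod (p ^ m))})
    (hAh' : Ah' = Submodule.span (ZMod (p ^ m))
      {v | ∃ i : Fin n, h ≤ (i : ℕ) ∧ v = Pi.single i (1 : ZMod (p ^ m))})
    (φ : (Fin n → ZMod (p ^ m)) → R)
    (hadd : ∀ x y : Fin n → ZMod (p ^ m), ∃ r : R, φ (x + y) = φ x + φ y + φ x * r)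
    (hvan : ∀ b ∈ Ah, φ b ∈ 𝔭)
    (hnonvan : ∀ a ∈ Ah', a ≠ 0 → φ a ∉ 𝔭)
    (a b : Fin n → ZMod (p ^ m)) (hb : b ∈ Ah) (ha : a ∈ Ah') (ha0 : a ≠ 0)
    (hnot : a + b ∉ Ah) :
    φ (a + b) ∉ 𝔭 :=
  stmt13_general R 𝔭 p m n Ah Ah' φ hadd hvan hnonvan a b hb ha ha0
end

section
/- Let $R$ be a commutative ring, let $\mathfrak{p}$ be a prime ideal, and let $x_1, \dots, x_N \in R$. Suppose $\prod_{i=1}^N (T - x_i) \equiv \prod_{j=1}^M (T - y_j)^{e} \pmod{\mathfrak{p}}$ as polynomials over $R/\mathfrak{p}$, with $N = Me$, and exactly one $y_{j_0} \equiv 0 \bmod \mathfrak{p}$ while $y_j \not\equiv 0 \bmod \mathfrak{p}$ for $j \neq j_0$. Then the coefficient of $T^e$ on the left side is congruent modulo $\mathfrak{p}$ to $\pm \prod_{j \neq j_0} y_j^{e}$, which is not in $\mathfrak{p}$. -/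
/-!
Modulo `𝔭` the root `y j₀` becomes `0`, so the reduction of `∏ i, (X - C (x i))` is
`(X * g) ^ e` with `g = ∏_{j ≠ j₀} (X - C (y j))`. The coefficient of `X ^ e` in `(X * g) ^ e`
is `g(0) ^ e = ± ∏_{j ≠ j₀} (y j) ^ e`, a product of elements outside the prime `𝔭`.
-/

open Polynomial

theorem Polynomial.coeff_X_mul_pow_self {S : Type*} [CommSemiring S] (g : S[X]) (e : ℕ) :
    ((X * g) ^ e).coeff e = g.coeff 0 ^ e := by
  simpa [mul_pow, coeff_zero_eq_eval_zero] using coeff_X_pow_mul (g ^ e) e 0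

theorem Polynomial.coeff_zero_prod_X_sub_C {S ι : Type*} [CommRing S] (s : Finset ι) (a : ι → S) :
    (∏ j ∈ s, (X - C (a j))).coeff 0 = (-1) ^ s.card * ∏ j ∈ s, a j := by
  simp [coeff_zero_prod, Finset.prod_neg]

theorem Polynomial.map_prod_X_sub_C_eq_X_mul {R S ι : Type*} [CommRing R] [CommRing S]
    [DecidableEq ι] (φ : R →+* S) (s : Finset ι) (y : ι → R) {j₀ : ι} (hj₀ : j₀ ∈ s)
    (hy : φ (y j₀) = 0) :
    (∏ j ∈ s, (X - C (y j))).map φ = X * ∏ j ∈ s.erase j₀, (X - C (φ (y j))) := by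
  simp only [Polynomial.map_prod, Polynomial.map_sub, map_X, map_C]
  rw [← Finset.mul_prod_erase s _ hj₀, hy, C_0, sub_zero]

theorem stmt18_general (R : Type*) [CommRing R] (𝔭 : Ideal R) (h𝔭 : 𝔭.IsPrime)
    (N M e : ℕ) (x : Fin N → R) (y : Fin M → R)
    (hcong : (∏ i, (X - C (x i))).map (Ideal.Quotient.mk 𝔭) =
      ((∏ j, (X - C (y j))).map (Ideal.Quotient.mk 𝔭)) ^ e)
    (j₀ : Fin M) (hj₀ : y j₀ ∈ 𝔭) (hj : ∀ j, j ≠ j₀ → y j ∉ 𝔭) :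
    ∃ ε : R, (ε = 1 ∨ ε = -1) ∧
      (∏ i, (X - C (x i))).coeff e - ε * ∏ j ∈ Finset.univ.erase j₀, (y j) ^ e ∈ 𝔭 ∧
      (∏ i, (X - C (x i))).coeff e ∉ 𝔭 := by
  set ε : R := (-1) ^ ((Finset.univ.erase j₀).card * e)
  have hcoeff : Ideal.Quotient.mk 𝔭 ((∏ i, (X - C (x i))).coeff e) =
      Ideal.Quotient.mk 𝔭 (ε * ∏ j ∈ Finset.univ.erase j₀, y j ^ e) := by
    rw [← coeff_map, hcong, map_prod_X_sub_C_eq_X_mul _ _ _ (Finset.mem_univ j₀)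
      (Ideal.Quotient.eq_zero_iff_mem.mpr hj₀), coeff_X_mul_pow_self, coeff_zero_prod_X_sub_C]
    simp only [ε, map_mul, map_pow, map_neg, map_one, map_prod, mul_pow, pow_mul, Finset.prod_pow]
  have hmem : (∏ i, (X - C (x i))).coeff e - ε * ∏ j ∈ Finset.univ.erase j₀, y j ^ e ∈ 𝔭 :=
    Ideal.Quotient.eq.mp hcoeff
  have hnot : ε * ∏ j ∈ Finset.univ.erase j₀, y j ^ e ∉ 𝔭 := by
    rw [Ideal.unit_mul_mem_iff_mem _ (isUnit_neg_one.pow _), Ideal.IsPrime.prod_mem_iff]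
    rintro ⟨j, hjs, hyj⟩
    exact hj j (Finset.ne_of_mem_erase hjs) (h𝔭.mem_of_pow_mem e hyj)
  refine ⟨ε, neg_one_pow_eq_or R _, hmem, fun hc => hnot ?_⟩
  simpa using 𝔭.sub_mem hc hmem

/-- if `∏_{i=1}^N (T - x_i) ≡ (∏_{j=1}^M (T - y_j))^e (mod 𝔭)` with
`N = M·e`, exactly one `y_{j₀} ≡ 0 mod 𝔭` and `y_j ∉ 𝔭` for `j ≠ j₀`, then the
coefficient of `T^e` on the left is congruent mod `𝔭` to `± ∏_{j ≠ j₀} y_j^e`, and in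
particular does not lie in `𝔭`. -/
theorem stmt18 (R : Type*) [CommRing R] (𝔭 : Ideal R) (h𝔭 : 𝔭.IsPrime)
    (N M e : ℕ) (hNMe : N = M * e) (x : Fin N → R) (y : Fin M → R)
    (hcong : (∏ i, (X - C (x i))).map (Ideal.Quotient.mk 𝔭) =
      ((∏ j, (X - C (y j))).map (Ideal.Quotient.mk 𝔭)) ^ e)
    (j₀ : Fin M) (hj₀ : y j₀ ∈ 𝔭) (hj : ∀ j, j ≠ j₀ → y j ∉ 𝔭) :
    ∃ ε : R, (ε = 1 ∨ ε = -1) ∧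
      (∏ i, (X - C (x i))).coeff e - ε * ∏ j ∈ Finset.univ.erase j₀, (y j) ^ e ∈ 𝔭 ∧
      (∏ i, (X - C (x i))).coeff e ∉ 𝔭 :=
  stmt18_general R 𝔭 h𝔭 N M e x y hcong j₀ hj₀ hj
end
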